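/- Under the truncation model with regularly varying tails 𝐅̄ and 𝐆̄ of indices −1/γ₁ and −1/γ₂, the survival functions F̄ := 1−F and Ḡ := 1−G of the observed marginals are regularly varying at infinity with indices −1/γ and −1/γ₂ respectively, where γ := γ₁γ₂/(γ₁+γ₂): for every x > 0, F̄(xz)/F̄(z) → x^{−1/γ} and Ḡ(xz)/Ḡ(z) → x^{−1/γ₂} as z → ∞. -/

import Mathlib

/-!
Put `a = 1/γ₁`, `b = 1/γ₂`, `F̄ = 1 - 𝐅`, `Ḡ = 1 - 𝐆`. For `y ≥ 0` one has
`1 - F y = p⁻¹ ∫_{(y,∞)} Ḡ dμ_𝐅`, and, since `p = ∫_{(0,∞)} 𝐅 dμ_𝐆` by Fubini (the diagonal is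
null because `μ_𝐅` has no atoms), also `1 - G y = p⁻¹ ∫_{(y,∞)} 𝐅 dμ_𝐆`.

The last integral lies between `𝐅(y) Ḡ(y)` and `Ḡ(y)`, so it is asymptotic to `Ḡ`. For the first,
cut `(z,∞)` along the grid `z < rz < ⋯ < rⁿz` and bound `Ḡ` on each piece by its values at the
endpoints: letting `z → ∞`, then `n → ∞`, then `r → 1`, the resulting Stieltjes sums show
`∫_{(z,∞)} Ḡ dμ_𝐅 ~ a/(a+b) · F̄(z) Ḡ(z)`. A function asymptotic to a multiple of a regularly
varying one is regularly varying with the same index, and `F̄ Ḡ` has index `-(a+b) = -1/γ`.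
-/

open MeasureTheory Filter Set Real Topology

def IsRegularlyVarying (f : ℝ → ℝ) (ρ : ℝ) : Prop :=
  ∀ x > (0 : ℝ), Tendsto (fun z => f (x * z) / f z) atTop (𝓝 (x ^ ρ))

namespace IsRegularlyVarying

variable {f g : ℝ → ℝ} {ρ σ : ℝ}

theorem mul (hf : IsRegularlyVarying f ρ) (hg : IsRegularlyVarying g σ) :
    IsRegularlyVarying (fun z => f z * g z) (ρ + σ) := fun x hx => by
  rw [rpow_add hx]
  exact ((hf x hx).mul (hg x hx)).congr fun z => (mul_div_mul_comm _ _ _ _).symm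

theorem of_tendsto_div (hg : IsRegularlyVarying g ρ) {c : ℝ}
    (hfg : Tendsto (fun z => f z / g z) atTop (𝓝 c)) (hc : c ≠ 0) :
    IsRegularlyVarying f ρ := fun x hx => by
  have hxz : Tendsto (fun z => x * z) atTop atTop := tendsto_id.const_mul_atTop hx
  have hg0 : ∀ᶠ z in atTop, g z ≠ 0 :=
    (hfg.eventually_ne hc).mono fun z hz h => hz (by rw [h, div_zero])
  have hlim := ((hfg.comp hxz).mul (hg x hx)).mul (hfg.inv₀ hc)
  rw [mul_right_comm, mul_inv_cancel₀ hc, one_mul] at hlim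
  refine hlim.congr' ?_
  filter_upwards [hg0, hxz.eventually hg0] with z hz hxz
  simp only [Function.comp_apply, inv_div, div_mul_div_cancel₀ hxz, div_mul_div_cancel₀ hz]

theorem tendsto_sum_mul_sub_div (hf : IsRegularlyVarying f ρ) (hg : IsRegularlyVarying g σ)
    {x y : ℕ → ℝ} (hx : ∀ k, 0 < x k) (hy : ∀ k, 0 < y k) (n : ℕ) :
    Tendsto (fun z => (∑ k ∈ Finset.range n, g (y k * z) * (f (x k * z) - f (x (k + 1) * z)))
        / (f z * g z)) atTop
      (𝓝 (∑ k ∈ Finset.range n, y k ^ σ * (x k ^ ρ - x (k + 1) ^ ρ))) := by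
  simp_rw [Finset.sum_div]
  refine tendsto_finsetSum _ fun k _ => ?_
  exact ((hg _ (hy k)).mul ((hf _ (hx k)).sub (hf _ (hx (k + 1))))).congr fun z => by ring

end IsRegularlyVarying

section TailIntegrals

variable {μ : Measure ℝ}

theorem setIntegral_Ioi_eq_Ioc_add_Ioi {f : ℝ → ℝ} {a b : ℝ} (hab : a ≤ b)
    (hf : IntegrableOn f (Ioi a) μ) :
    ∫ x in Ioi a, f x ∂μ = ∫ x in Ioc a b, f x ∂μ + ∫ x in Ioi b, f x ∂μ := by
  rw [← Ioc_union_Ioi_eq_Ioi hab] at hf ⊢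
  exact setIntegral_union (Ioc_disjoint_Ioi le_rfl) measurableSet_Ioi
    (hf.mono_set subset_union_left) (hf.mono_set subset_union_right)

theorem setIntegral_Ioi_eq_sum_Ioc_add_Ioi {f : ℝ → ℝ} {u : ℕ → ℝ} (hu : Monotone u)
    (hf : IntegrableOn f (Ioi (u 0)) μ) (n : ℕ) :
    ∫ x in Ioi (u 0), f x ∂μ =
      ∑ k ∈ Finset.range n, ∫ x in Ioc (u k) (u (k + 1)), f x ∂μ + ∫ x in Ioi (u n), f x ∂μ := by
  induction n with
  | zero => simp
  | succ n ih =>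
    rw [ih, Finset.sum_range_succ, add_assoc, ← setIntegral_Ioi_eq_Ioc_add_Ioi (hu n.le_succ)
      (hf.mono_set (Ioi_subset_Ioi (hu n.zero_le)))]

theorem one_sub_inv_mul_setIntegral_Ioc {f : ℝ → ℝ} {a y p : ℝ} (hf : IntegrableOn f (Ioi a) μ)
    (hp : p = ∫ x in Ioi a, f x ∂μ) (hp0 : p ≠ 0) (hy : a ≤ y) :
    1 - p⁻¹ * ∫ x in Ioc a y, f x ∂μ = p⁻¹ * ∫ x in Ioi y, f x ∂μ := by
  have hsplit := setIntegral_Ioi_eq_Ioc_add_Ioi hy hf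
  rw [← hp] at hsplit
  field_simp
  linarith

variable [IsFiniteMeasure μ]

theorem setIntegral_le_of_le_const_real {s : Set ℝ} {f : ℝ → ℝ} {c : ℝ} (hs : MeasurableSet s)
    (hf : ∀ x ∈ s, f x ≤ c) (hfint : IntegrableOn f s μ) :
    ∫ x in s, f x ∂μ ≤ c * μ.real s := by
  simpa [mul_comm] using setIntegral_mono_on hfint (integrableOn_const (measure_ne_top μ s)) hs hf

theorem integrableOn_of_mem_Icc {s : Set ℝ} {f : ℝ → ℝ} {m M : ℝ} (hs : MeasurableSet s)
    (hf : Measurable f) (h : ∀ x ∈ s, f x ∈ Icc m M) : IntegrableOn f s μ :=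
  Measure.integrableOn_of_bounded (M := max |m| |M|) (measure_ne_top μ s)
    hf.aestronglyMeasurable <| (ae_restrict_iff' hs).2 <| ae_of_all _ fun x hx =>
      abs_le_max_abs_abs (h x hx).1 (h x hx).2

theorem Monotone.integrableOn_Ioi {f : ℝ → ℝ} {M : ℝ} (hf : Monotone f) (hM : ∀ x, f x ≤ M)
    (a : ℝ) : IntegrableOn f (Ioi a) μ :=
  integrableOn_of_mem_Icc measurableSet_Ioi hf.measurable fun _ hx => ⟨hf hx.le, hM _⟩

theorem Antitone.integrableOn_Ioi {g : ℝ → ℝ} {m : ℝ} (hg : Antitone g) (hm : ∀ x, m ≤ g x)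
    (a : ℝ) : IntegrableOn g (Ioi a) μ :=
  integrableOn_of_mem_Icc measurableSet_Ioi hg.measurable fun _ hx => ⟨hm _, hg hx.le⟩

theorem measureReal_Ioc_eq_sub {a b : ℝ} (hab : a ≤ b) :
    μ.real (Ioc a b) = μ.real (Ioi a) - μ.real (Ioi b) := by
  rw [← Ioi_sdiff_Ioi, measureReal_sdiff (Ioi_subset_Ioi hab) measurableSet_Ioi]

theorem Monotone.tendsto_setIntegral_Ioi_div_measureReal_Ioi {f : ℝ → ℝ} {c : ℝ}
    (hf : Monotone f) (hfc : Tendsto f atTop (𝓝 c)) (hμ_pos : ∀ x, 0 < μ.real (Ioi x)) :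
    Tendsto (fun y => (∫ x in Ioi y, f x ∂μ) / μ.real (Ioi y)) atTop (𝓝 c) := by
  have hle := hf.ge_of_tendsto hfc
  refine tendsto_of_tendsto_of_tendsto_of_le_of_le hfc tendsto_const_nhds (fun y => ?_) fun y => ?_
  · rw [le_div_iff₀ (hμ_pos y)]
    exact setIntegral_ge_of_const_le_real measurableSet_Ioi (measure_ne_top μ _)
      (fun x hx => hf hx.le) (hf.integrableOn_Ioi hle y)
  · rw [div_le_iff₀ (hμ_pos y)]
    exact setIntegral_le_of_le_const_real measurableSet_Ioi (fun x _ => hle x)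
      (hf.integrableOn_Ioi hle y)

variable {g : ℝ → ℝ}

theorem Antitone.sum_mul_measureReal_le_setIntegral_Ioi (hg : Antitone g) (hg0 : ∀ x, 0 ≤ g x)
    {u : ℕ → ℝ} (hu : Monotone u) (n : ℕ) :
    ∑ k ∈ Finset.range n, g (u (k + 1)) * (μ.real (Ioi (u k)) - μ.real (Ioi (u (k + 1))))
      ≤ ∫ x in Ioi (u 0), g x ∂μ := by
  rw [setIntegral_Ioi_eq_sum_Ioc_add_Ioi hu (hg.integrableOn_Ioi hg0 _) n]
  refine le_add_of_le_of_nonneg (Finset.sum_le_sum fun k _ => ?_)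
    (setIntegral_nonneg measurableSet_Ioi fun x _ => hg0 x)
  rw [← measureReal_Ioc_eq_sub (hu k.le_succ)]
  exact setIntegral_ge_of_const_le_real measurableSet_Ioc (measure_ne_top μ _)
    (fun _ hx => hg hx.2) ((hg.integrableOn_Ioi hg0 _).mono_set Ioc_subset_Ioi_self)

theorem Antitone.setIntegral_Ioi_le_sum_mul_measureReal (hg : Antitone g) (hg0 : ∀ x, 0 ≤ g x)
    {u : ℕ → ℝ} (hu : Monotone u) (n : ℕ) :
    ∫ x in Ioi (u 0), g x ∂μ
      ≤ ∑ k ∈ Finset.range n, g (u k) * (μ.real (Ioi (u k)) - μ.real (Ioi (u (k + 1))))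
        + g (u n) * μ.real (Ioi (u n)) := by
  rw [setIntegral_Ioi_eq_sum_Ioc_add_Ioi hu (hg.integrableOn_Ioi hg0 _) n]
  gcongr with k
  · rw [← measureReal_Ioc_eq_sub (hu k.le_succ)]
    exact setIntegral_le_of_le_const_real measurableSet_Ioc (fun _ hx => hg hx.1.le)
      ((hg.integrableOn_Ioi hg0 _).mono_set Ioc_subset_Ioi_self)
  · exact setIntegral_le_of_le_const_real measurableSet_Ioi (fun _ hx => hg hx.le)
      (hg.integrableOn_Ioi hg0 _)

end TailIntegrals

theorem tendsto_one_sub_rpow_neg_div_sub_one (a : ℝ) :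
    Tendsto (fun r : ℝ => (1 - r ^ (-a)) / (r - 1)) (𝓝[≠] 1) (𝓝 a) := by
  have hderiv : HasDerivAt (fun r : ℝ => 1 - r ^ (-a)) a 1 := by
    simpa using (hasDerivAt_rpow_const (p := -a) (Or.inl one_ne_zero)).const_sub 1
  refine (hasDerivAt_iff_tendsto_slope.mp hderiv).congr fun r => ?_
  simp [slope_def_field]

theorem tendsto_one_sub_rpow_neg_div_one_sub_rpow_neg (a : ℝ) {b : ℝ} (hb : b ≠ 0) :
    Tendsto (fun r : ℝ => (1 - r ^ (-a)) / (1 - r ^ (-b))) (𝓝[>] 1) (𝓝 (a / b)) := by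
  refine (((tendsto_one_sub_rpow_neg_div_sub_one a).div
    (tendsto_one_sub_rpow_neg_div_sub_one b) hb).mono_left (nhdsGT_le_nhdsNE 1)).congr' ?_
  filter_upwards [self_mem_nhdsWithin] with r hr
  exact div_div_div_cancel_right₀ (sub_ne_zero.2 (ne_of_gt hr)) _ _

section GeometricGrid

/- With `F̄(xz)/F̄(z) → x^(-a)` and `Ḡ(xz)/Ḡ(z) → x^(-b)`, the sums below are the limits as
`z → ∞` of the lower and upper Stieltjes sums of `∫_{(z,∞)} Ḡ dμ_𝐅 / (F̄(z) Ḡ(z))` on the grid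
`z < rz < ⋯ < rⁿz`. -/

variable {a b r : ℝ}

theorem sum_rpow_succ_mul_sub_eq (hr : 0 < r) (n : ℕ) :
    ∑ k ∈ Finset.range n, (r ^ (k + 1)) ^ (-b) * ((r ^ k) ^ (-a) - (r ^ (k + 1)) ^ (-a))
      = r ^ (-b) * (1 - r ^ (-a)) * ∑ k ∈ Finset.range n, (r ^ (-(a + b))) ^ k := by
  rw [Finset.mul_sum]
  refine Finset.sum_congr rfl fun k _ => ?_
  simp only [← rpow_pow_comm hr.le, neg_add, rpow_add hr]
  ring

theorem sum_rpow_mul_sub_add_eq (hr : 0 < r) (n : ℕ) :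
    ∑ k ∈ Finset.range n, (r ^ k) ^ (-b) * ((r ^ k) ^ (-a) - (r ^ (k + 1)) ^ (-a))
        + (r ^ n) ^ (-b) * (r ^ n) ^ (-a)
      = (1 - r ^ (-a)) * ∑ k ∈ Finset.range n, (r ^ (-(a + b))) ^ k + (r ^ (-(a + b))) ^ n := by
  rw [Finset.mul_sum]
  simp only [← rpow_pow_comm hr.le, neg_add, rpow_add hr]
  congr 1
  · exact Finset.sum_congr rfl fun k _ => by ring
  · ring

theorem tendsto_geom_sum_rpow (hab : 0 < a + b) (hr : 1 < r) :
    Tendsto (fun n => ∑ k ∈ Finset.range n, (r ^ (-(a + b))) ^ k) atTop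
      (𝓝 (1 - r ^ (-(a + b)))⁻¹) :=
  (hasSum_geometric_of_lt_one (rpow_nonneg (by linarith) _)
    (rpow_lt_one_of_one_lt_of_neg hr (by linarith))).tendsto_sum_nat

theorem exists_lt_sum_rpow_succ_mul_sub (hab : 0 < a + b) {c : ℝ} (hc : c < a / (a + b)) :
    ∃ r > 1, ∃ n : ℕ,
      c < ∑ k ∈ Finset.range n, (r ^ (k + 1)) ^ (-b) * ((r ^ k) ^ (-a) - (r ^ (k + 1)) ^ (-a)) := by
  have hβ : Tendsto (fun r : ℝ => r ^ (-b)) (𝓝[>] 1) (𝓝 1) := by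
    simpa using ((continuousAt_rpow_const 1 (-b) (Or.inl one_ne_zero)).tendsto.mono_left
      nhdsWithin_le_nhds)
  have hlim := hβ.mul (tendsto_one_sub_rpow_neg_div_one_sub_rpow_neg a hab.ne')
  rw [one_mul] at hlim
  obtain ⟨r, hcr, hr⟩ := ((hlim.eventually (lt_mem_nhds hc)).and self_mem_nhdsWithin).exists
  obtain ⟨n, hn⟩ := (((tendsto_geom_sum_rpow hab hr).const_mul
    (r ^ (-b) * (1 - r ^ (-a)))).eventually
      (lt_mem_nhds (by simpa only [div_eq_mul_inv, mul_assoc] using hcr))).exists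
  exact ⟨r, hr, n, by rwa [sum_rpow_succ_mul_sub_eq (by linarith)]⟩

theorem exists_sum_rpow_mul_sub_add_lt (hab : 0 < a + b) {c : ℝ} (hc : a / (a + b) < c) :
    ∃ r > 1, ∃ n : ℕ,
      ∑ k ∈ Finset.range n, (r ^ k) ^ (-b) * ((r ^ k) ^ (-a) - (r ^ (k + 1)) ^ (-a))
        + (r ^ n) ^ (-b) * (r ^ n) ^ (-a) < c := by
  obtain ⟨r, hcr, hr⟩ := (((tendsto_one_sub_rpow_neg_div_one_sub_rpow_neg a hab.ne').eventually
    (gt_mem_nhds hc)).and self_mem_nhdsWithin).exists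
  have hlim := ((tendsto_geom_sum_rpow hab hr).const_mul (1 - r ^ (-a))).add
    (tendsto_pow_atTop_nhds_zero_of_lt_one (rpow_nonneg (by linarith) (-(a + b)))
      (rpow_lt_one_of_one_lt_of_neg hr (by linarith)))
  obtain ⟨n, hn⟩ := (hlim.eventually
    (gt_mem_nhds (by simpa only [div_eq_mul_inv, add_zero] using hcr))).exists
  exact ⟨r, hr, n, by rwa [sum_rpow_mul_sub_add_eq (by linarith)]⟩

end GeometricGrid

section RegularlyVaryingTails

variable {μ : Measure ℝ} [IsFiniteMeasure μ]

theorem tendsto_setIntegral_Ioi_div_measureReal_Ioi_mul {g : ℝ → ℝ} {a b : ℝ} (hab : 0 < a + b)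
    (hg : Antitone g) (hg_pos : ∀ x, 0 < g x) (hμ_pos : ∀ x, 0 < μ.real (Ioi x))
    (hμ : IsRegularlyVarying (fun z => μ.real (Ioi z)) (-a)) (hgRV : IsRegularlyVarying g (-b)) :
    Tendsto (fun z => (∫ x in Ioi z, g x ∂μ) / (μ.real (Ioi z) * g z)) atTop
      (𝓝 (a / (a + b))) := by
  have hg0 : ∀ x, 0 ≤ g x := fun x => (hg_pos x).le
  have hgrid : ∀ {r : ℝ}, 1 < r → ∀ {z : ℝ}, 0 < z → Monotone fun k : ℕ => r ^ k * z :=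
    fun hr _ hz _ _ hkl => mul_le_mul_of_nonneg_right (pow_le_pow_right₀ hr.le hkl) hz.le
  refine tendsto_order.2 ⟨fun c hc => ?_, fun c hc => ?_⟩
  · obtain ⟨r, hr, n, hn⟩ := exists_lt_sum_rpow_succ_mul_sub hab hc
    have hlim := hμ.tendsto_sum_mul_sub_div hgRV (x := fun k => r ^ k) (y := fun k => r ^ (k + 1))
      (fun k => by positivity) (fun k => by positivity) n
    filter_upwards [eventually_gt_atTop 0, hlim.eventually (lt_mem_nhds hn)] with z hz hcz
    refine hcz.trans_le (div_le_div_of_nonneg_right ?_ (mul_pos (hμ_pos z) (hg_pos z)).le)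
    simpa only [pow_zero, one_mul] using
      hg.sum_mul_measureReal_le_setIntegral_Ioi (μ := μ) hg0 (hgrid hr hz) n
  · obtain ⟨r, hr, n, hn⟩ := exists_sum_rpow_mul_sub_add_lt hab hc
    have hrn : 0 < r ^ n := pow_pos (by linarith) n
    have hlim := (hμ.tendsto_sum_mul_sub_div hgRV (x := fun k => r ^ k) (y := fun k => r ^ k)
      (fun k => by positivity) (fun k => by positivity) n).add ((hgRV _ hrn).mul (hμ _ hrn))
    filter_upwards [eventually_gt_atTop 0, hlim.eventually (gt_mem_nhds hn)] with z hz hcz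
    have hbound := hg.setIntegral_Ioi_le_sum_mul_measureReal (μ := μ) hg0 (hgrid hr hz) n
    simp only [pow_zero, one_mul] at hbound
    refine (div_le_div_of_nonneg_right hbound (mul_pos (hμ_pos z) (hg_pos z)).le).trans_lt ?_
    convert hcz using 1
    ring

theorem isRegularlyVarying_one_sub_inv_mul_setIntegral_Ioc_of_antitone {g : ℝ → ℝ} {a b p : ℝ}
    (ha : 0 < a) (hb : 0 ≤ b) (hg : Antitone g) (hg_pos : ∀ x, 0 < g x)
    (hμ_pos : ∀ x, 0 < μ.real (Ioi x)) (hμ : IsRegularlyVarying (fun z => μ.real (Ioi z)) (-a))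
    (hgRV : IsRegularlyVarying g (-b)) (hp : p = ∫ x in Ioi 0, g x ∂μ) (hp0 : p ≠ 0) :
    IsRegularlyVarying (fun y => 1 - p⁻¹ * ∫ x in Ioc 0 y, g x ∂μ) (-a + -b) := by
  refine (hμ.mul hgRV).of_tendsto_div (c := p⁻¹ * (a / (a + b))) ?_
    (mul_ne_zero (inv_ne_zero hp0) (by positivity))
  refine ((tendsto_setIntegral_Ioi_div_measureReal_Ioi_mul (by positivity) hg hg_pos hμ_pos hμ
    hgRV).const_mul p⁻¹).congr' ?_
  filter_upwards [eventually_ge_atTop 0] with z hz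
  rw [one_sub_inv_mul_setIntegral_Ioc (hg.integrableOn_Ioi (fun x => (hg_pos x).le) 0) hp hp0 hz,
    mul_div_assoc]

theorem isRegularlyVarying_one_sub_inv_mul_setIntegral_Ioc_of_monotone {f : ℝ → ℝ} {c ρ p : ℝ}
    (hf : Monotone f) (hfc : Tendsto f atTop (𝓝 c)) (hc : c ≠ 0)
    (hμ_pos : ∀ x, 0 < μ.real (Ioi x)) (hμ : IsRegularlyVarying (fun z => μ.real (Ioi z)) ρ)
    (hp : p = ∫ x in Ioi 0, f x ∂μ) (hp0 : p ≠ 0) :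
    IsRegularlyVarying (fun y => 1 - p⁻¹ * ∫ x in Ioc 0 y, f x ∂μ) ρ := by
  refine hμ.of_tendsto_div (c := p⁻¹ * c) ?_ (mul_ne_zero (inv_ne_zero hp0) hc)
  refine ((hf.tendsto_setIntegral_Ioi_div_measureReal_Ioi hfc hμ_pos).const_mul p⁻¹).congr' ?_
  filter_upwards [eventually_ge_atTop 0] with z hz
  rw [one_sub_inv_mul_setIntegral_Ioc (hf.integrableOn_Ioi (hf.ge_of_tendsto hfc) 0) hp hp0 hz,
    mul_div_assoc]

end RegularlyVaryingTails

theorem integral_measureReal_Ioi_eq_integral_measureReal_Iio (μ ν : Measure ℝ)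
    [IsFiniteMeasure μ] [IsFiniteMeasure ν] :
    ∫ x, ν.real (Ioi x) ∂μ = ∫ y, μ.real (Iio y) ∂ν := by
  have hs : MeasurableSet {q : ℝ × ℝ | q.1 < q.2} := measurableSet_lt measurable_fst measurable_snd
  have hIoi : Measurable fun x => ν (Ioi x) :=
    Antitone.measurable fun _ _ h => measure_mono (Ioi_subset_Ioi h)
  have hIio : Measurable fun y => μ (Iio y) :=
    Monotone.measurable fun _ _ h => measure_mono (Iio_subset_Iio h)
  simp only [measureReal_def]
  rw [integral_toReal hIoi.aemeasurable (ae_of_all _ fun _ => measure_lt_top _ _),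
    integral_toReal hIio.aemeasurable (ae_of_all _ fun _ => measure_lt_top _ _)]
  exact congrArg ENNReal.toReal ((Measure.prod_apply hs).symm.trans (Measure.prod_apply_symm hs))

theorem setIntegral_Ioi_measureReal_Ioi_eq {μ ν : Measure ℝ} [IsFiniteMeasure μ]
    [IsFiniteMeasure ν] [NullSingletonClass μ] {a : ℝ} (hμa : μ (Iic a) = 0) :
    ∫ x in Ioi a, ν.real (Ioi x) ∂μ = ∫ y in Ioi a, μ.real (Iic y) ∂ν := by
  have hae : ∀ᵐ x ∂μ, x ∈ Ioi a :=
    ae_iff.2 (measure_mono_null (fun _ hx => le_of_not_gt (b := a) hx) hμa)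
  have hzero : ∀ y ∉ Ioi a, μ.real (Iic y) = 0 := fun y hy =>
    measureReal_mono_null (Iic_subset_Iic.2 (not_lt.1 hy)) ((measureReal_eq_zero_iff).2 hμa)
  rw [Measure.restrict_eq_self_of_ae_mem hae, setIntegral_eq_integral_of_forall_compl_eq_zero hzero,
    integral_measureReal_Ioi_eq_integral_measureReal_Iio]
  congr 1 with y
  exact measureReal_congr Iio_ae_eq_Iic

section DistributionFunction

variable {Φ : ℝ → ℝ} {μ : Measure ℝ}

theorem isProbabilityMeasure_of_cdf (hμ : ∀ x, μ (Iic x) = ENNReal.ofReal (Φ x))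
    (htop : Tendsto Φ atTop (𝓝 1)) : IsProbabilityMeasure μ :=
  ⟨tendsto_nhds_unique (tendsto_measure_Iic_atTop μ)
    (by simpa only [hμ, ENNReal.ofReal_one] using ENNReal.tendsto_ofReal htop)⟩

theorem measureReal_Iic_of_cdf (hμ : ∀ x, μ (Iic x) = ENNReal.ofReal (Φ x)) (hΦ : Monotone Φ)
    (hbot : Tendsto Φ atBot (𝓝 0)) (x : ℝ) : μ.real (Iic x) = Φ x := by
  rw [measureReal_def, hμ, ENNReal.toReal_ofReal (hΦ.le_of_tendsto hbot x)]

theorem measureReal_Ioi_of_cdf [IsProbabilityMeasure μ]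
    (hμ : ∀ x, μ (Iic x) = ENNReal.ofReal (Φ x)) (hΦ : Monotone Φ)
    (hbot : Tendsto Φ atBot (𝓝 0)) (x : ℝ) : μ.real (Ioi x) = 1 - Φ x := by
  rw [← compl_Iic, probReal_compl_eq_one_sub measurableSet_Iic,
    measureReal_Iic_of_cdf hμ hΦ hbot]

theorem nullSingletonClass_of_cdf [IsFiniteMeasure μ]
    (hμ : ∀ x, μ (Iic x) = ENNReal.ofReal (Φ x)) (hΦ : Monotone Φ) (hΦc : Continuous Φ)
    (hbot : Tendsto Φ atBot (𝓝 0)) : NullSingletonClass μ := by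
  let S : StieltjesFunction ℝ := ⟨Φ, hΦ, fun _ => hΦc.continuousWithinAt⟩
  have hS : μ = S.measure := Measure.ext_of_Iic _ _ fun x => by
    rw [hμ, S.measure_Iic hbot, sub_zero]
  refine ⟨fun x => ?_⟩
  rw [hS, S.measure_singleton, (hΦc.continuousWithinAt (s := Iic x)).leftLim_eq, sub_self,
    ENNReal.ofReal_zero]

end DistributionFunction

theorem observed_tails_regularly_varying_general
    (FF GG : ℝ → ℝ) (γ₁ γ₂ : ℝ) (hγ₁ : 0 < γ₁) (hγ₂ : 0 < γ₂)
    (hFFmono : Monotone FF) (hFFcont : Continuous FF)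
    (hFF0 : ∀ x ≤ (0 : ℝ), FF x = 0) (hFFtop : Tendsto FF atTop (nhds 1))
    (hGGmono : Monotone GG)
    (hGG0 : ∀ x ≤ (0 : ℝ), GG x = 0) (hGGtop : Tendsto GG atTop (nhds 1))
    (hFFpos : ∀ z : ℝ, FF z < 1) (hGGpos : ∀ z : ℝ, GG z < 1)
    (hRVF : ∀ x > (0 : ℝ),
      Tendsto (fun z => (1 - FF (x * z)) / (1 - FF z)) atTop (nhds (x ^ (-(1 / γ₁)))))
    (hRVG : ∀ x > (0 : ℝ),
      Tendsto (fun z => (1 - GG (x * z)) / (1 - GG z)) atTop (nhds (x ^ (-(1 / γ₂)))))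
    (μF μG : Measure ℝ)
    (hμF : ∀ b, μF (Set.Iic b) = ENNReal.ofReal (FF b))
    (hμG : ∀ b, μG (Set.Iic b) = ENNReal.ofReal (GG b))
    (p : ℝ) (hp : p = ∫ z in Set.Ioi (0 : ℝ), (1 - GG z) ∂μF) (hppos : 0 < p)
    (F G : ℝ → ℝ)
    (hF : ∀ x, F x = p⁻¹ * ∫ z in Set.Ioc (0 : ℝ) x, (1 - GG z) ∂μF)
    (hG : ∀ y, G y = p⁻¹ * ∫ z in Set.Ioc (0 : ℝ) y, FF z ∂μG)
    (γ : ℝ) (hγ : γ = γ₁ * γ₂ / (γ₁ + γ₂)) :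
    (∀ x > (0 : ℝ),
      Tendsto (fun z => (1 - F (x * z)) / (1 - F z)) atTop (nhds (x ^ (-(1 / γ))))) ∧
    (∀ x > (0 : ℝ),
      Tendsto (fun z => (1 - G (x * z)) / (1 - G z)) atTop (nhds (x ^ (-(1 / γ₂))))) := by
  have hbot : ∀ Φ : ℝ → ℝ, (∀ x ≤ (0 : ℝ), Φ x = 0) → Tendsto Φ atBot (𝓝 0) := fun Φ hΦ =>
    tendsto_const_nhds.congr' (eventually_atBot.2 ⟨0, fun x hx => (hΦ x hx).symm⟩)
  have := isProbabilityMeasure_of_cdf hμF hFFtop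
  have := isProbabilityMeasure_of_cdf hμG hGGtop
  have := nullSingletonClass_of_cdf hμF hFFmono hFFcont (hbot FF hFF0)
  have tailF := measureReal_Ioi_of_cdf hμF hFFmono (hbot FF hFF0)
  have tailG := measureReal_Ioi_of_cdf hμG hGGmono (hbot GG hGG0)
  have hq : p = ∫ y in Ioi 0, FF y ∂μG := by
    rw [hp]
    simp only [← tailG]
    rw [setIntegral_Ioi_measureReal_Ioi_eq (by rw [hμF, hFF0 0 le_rfl, ENNReal.ofReal_zero])]
    simp only [measureReal_Iic_of_cdf hμF hFFmono (hbot FF hFF0)]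
  have hγ' : -(1 / γ) = -(1 / γ₁) + -(1 / γ₂) := by rw [hγ]; field_simp; ring
  have hRVμF : IsRegularlyVarying (fun z => μF.real (Ioi z)) (-(1 / γ₁)) := by
    simpa only [IsRegularlyVarying, tailF] using hRVF
  have hRVμG : IsRegularlyVarying (fun z => μG.real (Ioi z)) (-(1 / γ₂)) := by
    simpa only [IsRegularlyVarying, tailG] using hRVG
  suffices IsRegularlyVarying (fun z => 1 - F z) (-(1 / γ₁) + -(1 / γ₂)) ∧
      IsRegularlyVarying (fun z => 1 - G z) (-(1 / γ₂)) by rwa [hγ']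
  simp only [hF, hG]
  exact ⟨isRegularlyVarying_one_sub_inv_mul_setIntegral_Ioc_of_antitone (by positivity)
      (by positivity) (fun _ _ h => sub_le_sub_left (hGGmono h) 1) (fun z => sub_pos.2 (hGGpos z))
      (fun z => by rw [tailF]; linarith [hFFpos z]) hRVμF hRVG hp hppos.ne',
    isRegularlyVarying_one_sub_inv_mul_setIntegral_Ioc_of_monotone hFFmono hFFtop one_ne_zero
      (fun z => by rw [tailG]; linarith [hGGpos z]) hRVμG hq hppos.ne'⟩

/-- Under the truncation model with regularly varying tails 𝐅̄ and 𝐆̄ of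
indices −1/γ₁ and −1/γ₂, the survival functions F̄ := 1−F and Ḡ := 1−G of the observed
marginals are regularly varying at infinity with indices −1/γ and −1/γ₂ respectively,
where γ := γ₁γ₂/(γ₁+γ₂). -/
theorem observed_tails_regularly_varying
    (FF GG : ℝ → ℝ) (γ₁ γ₂ : ℝ) (hγ₁ : 0 < γ₁) (hγ₂ : 0 < γ₂)
    (hFFmono : Monotone FF) (hFFcont : Continuous FF)
    (hFF0 : ∀ x ≤ (0 : ℝ), FF x = 0) (hFFtop : Tendsto FF atTop (nhds 1))
    (hGGmono : Monotone GG) (hGGcont : Continuous GG)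
    (hGG0 : ∀ x ≤ (0 : ℝ), GG x = 0) (hGGtop : Tendsto GG atTop (nhds 1))
    (hFFpos : ∀ z : ℝ, FF z < 1) (hGGpos : ∀ z : ℝ, GG z < 1)
    (hRVF : ∀ x > (0 : ℝ),
      Tendsto (fun z => (1 - FF (x * z)) / (1 - FF z)) atTop (nhds (x ^ (-(1 / γ₁)))))
    (hRVG : ∀ x > (0 : ℝ),
      Tendsto (fun z => (1 - GG (x * z)) / (1 - GG z)) atTop (nhds (x ^ (-(1 / γ₂)))))
    (μF μG : Measure ℝ)
    (hμF : ∀ b, μF (Set.Iic b) = ENNReal.ofReal (FF b))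
    (hμG : ∀ b, μG (Set.Iic b) = ENNReal.ofReal (GG b))
    (p : ℝ) (hp : p = ∫ z in Set.Ioi (0 : ℝ), (1 - GG z) ∂μF) (hppos : 0 < p)
    (F G : ℝ → ℝ)
    (hF : ∀ x, F x = p⁻¹ * ∫ z in Set.Ioc (0 : ℝ) x, (1 - GG z) ∂μF)
    (hG : ∀ y, G y = p⁻¹ * ∫ z in Set.Ioc (0 : ℝ) y, FF z ∂μG)
    (γ : ℝ) (hγ : γ = γ₁ * γ₂ / (γ₁ + γ₂)) :
    (∀ x > (0 : ℝ),
      Tendsto (fun z => (1 - F (x * z)) / (1 - F z)) atTop (nhds (x ^ (-(1 / γ))))) ∧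
    (∀ x > (0 : ℝ),
      Tendsto (fun z => (1 - G (x * z)) / (1 - G z)) atTop (nhds (x ^ (-(1 / γ₂))))) :=
  observed_tails_regularly_varying_general FF GG γ₁ γ₂ hγ₁ hγ₂ hFFmono hFFcont hFF0 hFFtop hGGmono
    hGG0 hGGtop hFFpos hGGpos hRVF hRVG μF μG hμF hμG p hp hppos F G hF hG γ hγ
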